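/- Let (D, g, h) be a Czech hat game and S a set of vertices such that for all vertices u and w, if D.Adj u s' for some s' ∈ S and D.Adj s w for some s ∈ S, then D.Adj u w (i.e. N⁺(S) ⊆ ⋂_{u ∈ N⁻(S)} N⁺(u)). Then S is deletable. -/
import Mathlib


/-- A Czech hat game on the digraph with adjacency `D` (sage `v` sees sage `u`
iff `D v u`), guessness `g`, and hatness `h`, is winnable: there is a strategy
assigning to each sage `v` a set of `g v` guesses, depending only on the hats
she sees, such that for every coloring some sage guesses her own hat color. -/
def HatGame.Winnable {V : Type*} (D : V → V → Prop) (g h : V → ℕ) : Prop :=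
  ∃ F : ∀ v : V, (∀ u : V, Fin (h u)) → Finset (Fin (h v)),
    (∀ (v : V) (c c' : ∀ u : V, Fin (h u)),
        (∀ u : V, D v u → c u = c' u) → F v c = F v c') ∧
    (∀ (v : V) (c : ∀ u : V, Fin (h u)), (F v c).card = g v) ∧
    (∀ c : ∀ u : V, Fin (h u), ∃ v : V, c v ∈ F v c)

/-- If everything `S` can see is already seen by everyone who sees `S`,
then `S` is deletable. -/
theorem deletable_of_redundant_vision {V : Type*} [Fintype V]
    (D : V → V → Prop) (hloop : ∀ v, ¬ D v v)
    (g h : V → ℕ) (hgh : ∀ v, 0 < g v ∧ g v < h v) (S : Set V)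
    (hS : ∀ u w : V, (∃ s' ∈ S, D u s') → (∃ s ∈ S, D s w) → D u w) :
    (HatGame.Winnable (fun a b : {w : V // w ∉ S} => D a b)
        (fun a => g a) (fun a => h a) ↔
      HatGame.Winnable D g h) := by
  classical
  have hpos : ∀ v, 0 < h v := fun v => (hgh v).1.trans (hgh v).2
  have hdodge : ∀ (v : V) (s : Finset (Fin (h v))), s.card < h v → ∃ x, x ∉ s := by
    intro v s hs
    by_contra hx
    push_neg at hx
    have hsub : (Finset.univ : Finset (Fin (h v))) ⊆ s := fun x _ => hx x
    have := Finset.card_le_card hsub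
    simp only [Finset.card_univ, Fintype.card_fin] at this
    omega
  constructor
  · rintro ⟨F, hFdep, hFcard, hFwin⟩
    refine ⟨fun v c => if hv : v ∈ S then
        (Finset.univ.map (Fin.castLEEmb (le_of_lt (hgh v).2)))
      else F ⟨v, hv⟩ (fun u => c ↑u), ?_, ?_, ?_⟩
    · intro v c c' hcc
      by_cases hv : v ∈ S
      · simp only [dif_pos hv]
      · simp only [dif_neg hv]
        exact hFdep ⟨v, hv⟩ _ _ (fun u hu => hcc ↑u hu)
    · intro v c
      by_cases hv : v ∈ S
      · simp only [dif_pos hv, Finset.card_map, Finset.card_univ, Fintype.card_fin]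
      · simp only [dif_neg hv]
        exact hFcard ⟨v, hv⟩ _
    · intro c
      obtain ⟨v, hv⟩ := hFwin (fun u => c ↑u)
      exact ⟨↑v, by simpa only [dif_neg v.2] using hv⟩
  · rintro ⟨F, hFdep, hFcard, hFwin⟩
    have hex : ∀ (v : V) (s : Finset (Fin (h v))), ∃ x : Fin (h v), s.card < h v → x ∉ s := by
      intro v s
      by_cases hs : s.card < h v
      · obtain ⟨x, hx⟩ := hdodge v s hs
        exact ⟨x, fun _ => hx⟩
      · exact ⟨⟨0, hpos v⟩, fun h' => absurd h' hs⟩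
    choose pick hpick using hex
    have hpickF : ∀ (v : V) (c : ∀ u, Fin (h u)), pick v (F v c) ∉ F v c := by
      intro v c
      exact hpick v _ (by rw [hFcard]; exact (hgh v).2)
    -- a vertex of `S` with an in-neighbour in `S` is a "sink": it sees nothing in `S`
    have hsinkOf : ∀ x ∈ S, (∃ w ∈ S, D w x) → ∀ w' ∈ S, ¬ D x w' := by
      intro x hx hw w' hw' hxw'
      exact hloop x (hS x x ⟨w', hw', hxw'⟩ hw)
    let e0 : (∀ u : {w : V // w ∉ S}, Fin (h ↑u)) → ∀ v : V, Fin (h v) :=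
      fun c v => if hv : v ∈ S then ⟨0, hpos v⟩ else c ⟨v, hv⟩
    let e1 : (∀ u : {w : V // w ∉ S}, Fin (h ↑u)) → ∀ v : V, Fin (h v) :=
      fun c v => if v ∈ S ∧ (∀ w ∈ S, ¬ D v w) then pick v (F v (e0 c)) else e0 c v
    let e2 : (∀ u : {w : V // w ∉ S}, Fin (h ↑u)) → ∀ v : V, Fin (h v) :=
      fun c v => if v ∈ S ∧ ¬ (∀ w ∈ S, ¬ D v w) then pick v (F v (e1 c)) else e1 c v
    have he2not : ∀ (c) (v : V) (hv : v ∉ S), e2 c v = c ⟨v, hv⟩ := by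
      intro c v hv
      simp only [e2, e1, e0, dif_neg hv]
      rw [if_neg (by tauto), if_neg (by tauto)]
    refine ⟨fun v c => F ↑v (e2 c), ?_, ?_, ?_⟩
    · intro v c c' hcc
      apply hFdep
      intro x hvx
      by_cases hx : x ∈ S
      · have hvS : ∃ s' ∈ S, D ↑v s' := ⟨x, hx, hvx⟩
        have he0 : ∀ y, (∃ s ∈ S, D s y) → e0 c y = e0 c' y := by
          intro y hy
          by_cases hyS : y ∈ S
          · simp only [e0, dif_pos hyS]
          · simp only [e0, dif_neg hyS]
            exact hcc ⟨y, hyS⟩ (hS (↑v) y hvS hy)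
        have hFe0 : ∀ z, z ∈ S → F z (e0 c) = F z (e0 c') :=
          fun z hz => hFdep z _ _ (fun y hzy => he0 y ⟨z, hz, hzy⟩)
        have he1 : ∀ y, (∃ s ∈ S, D s y) → e1 c y = e1 c' y := by
          intro y hy
          by_cases hys : y ∈ S ∧ (∀ w ∈ S, ¬ D y w)
          · simp only [e1, if_pos hys, hFe0 y hys.1]
          · simp only [e1, if_neg hys]
            exact he0 y hy
        by_cases hsink : ∀ w ∈ S, ¬ D x w
        · have h1 : ¬ (x ∈ S ∧ ¬ ∀ w ∈ S, ¬ D x w) := fun hc => hc.2 hsink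
          have h2 : x ∈ S ∧ ∀ w ∈ S, ¬ D x w := ⟨hx, hsink⟩
          simp only [e2, e1]
          rw [if_neg h1, if_neg h1, if_pos h2, if_pos h2, hFe0 x hx]
        · have h2 : x ∈ S ∧ ¬ ∀ w ∈ S, ¬ D x w := ⟨hx, hsink⟩
          simp only [e2]
          rw [if_pos h2, if_pos h2, hFdep x (e1 c) (e1 c') (fun y hxy => he1 y ⟨x, hx, hxy⟩)]
      · rw [he2not c x hx, he2not c' x hx]
        exact hcc ⟨x, hx⟩ hvx
    · intro v c
      exact hFcard ↑v (e2 c)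
    · intro c
      obtain ⟨v, hv⟩ := hFwin (e2 c)
      by_cases hvS : v ∈ S
      · exfalso
        by_cases hsink : ∀ w ∈ S, ¬ D v w
        · have hn : ¬ (v ∈ S ∧ ¬ ∀ w ∈ S, ¬ D v w) := fun hc => hc.2 hsink
          have hp : v ∈ S ∧ ∀ w ∈ S, ¬ D v w := ⟨hvS, hsink⟩
          have h1 : e2 c v = pick v (F v (e0 c)) := by
            simp only [e2, e1]
            rw [if_neg hn, if_pos hp]
          have h2 : F v (e2 c) = F v (e0 c) := by
            apply hFdep
            intro y hvy
            have hyS : y ∉ S := fun hy => hsink y hy hvy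
            rw [he2not c y hyS]
            simp only [e0, dif_neg hyS]
          rw [h1, h2] at hv
          exact hpickF v _ hv
        · have hp : v ∈ S ∧ ¬ ∀ w ∈ S, ¬ D v w := ⟨hvS, hsink⟩
          have h1 : e2 c v = pick v (F v (e1 c)) := by
            simp only [e2]
            rw [if_pos hp]
          have h2 : F v (e2 c) = F v (e1 c) := by
            apply hFdep
            intro y hvy
            by_cases hyS : y ∈ S
            · have : ∀ w ∈ S, ¬ D y w := hsinkOf y hyS ⟨v, hvS, hvy⟩
              simp only [e2, if_neg (by tauto : ¬ (y ∈ S ∧ ¬ ∀ w ∈ S, ¬ D y w))]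
            · rw [he2not c y hyS]
              simp only [e1, e0, dif_neg hyS]
              rw [if_neg (by tauto)]
          rw [h1, h2] at hv
          exact hpickF v _ hv
      · refine ⟨⟨v, hvS⟩, ?_⟩
        have hEq : e2 c v = c ⟨v, hvS⟩ := he2not c v hvS
        rw [← hEq]
        exact hv
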